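/- Let d ≥ 2, r > 0, σ > 0, let 0 ≤ ε_tr < r/2 and 0 ≤ ε_te < r/2, and let D = {(x_i, y_i)}_{i=1}^n ⊂ ℝ^d × {−1,+1} satisfy (x_i)_1 = y_i·r/2 with induced dataset linearly separable with margin γ̃ > 0. Then the ε_te-robust accuracy of the ε_tr-robust max-ℓ2-margin solution θ̂^{ε_tr} (with respect to the signal-directed perturbation sets) on P_r equals Φ((r − 2ε_tr)(r − 2ε_te)/(4σγ̃)), i.e. P_{(X,Y)∼P_r}[min_{x' ∈ S_{ε_te}(X)} Y·(θ̂^{ε_tr})ᵀx' > 0] = Φ(r(r − 2ε_te)/(4σγ̃) − ε_tr(r − 2ε_te)/(2σγ̃)). -/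

import Mathlib

/-!
Write `θ = (a, w)` with `a` the signal coordinate. On the training set the robust margin of `θ`
is `a r/2 - ε|a| + margin(w) ≤ |a| (r/2 - ε) + ‖w‖ γ̃`, which by Cauchy–Schwarz is at most
`M = √((r/2 - ε)² + γ̃²)`, with equality only for `|a| = (r/2 - ε)/M`, `‖w‖ = γ̃/M`. The bound
is attained by `((r/2 - ε)/M, (γ̃/M) θ̃)` with `θ̃` an induced max-margin direction, so any robust
max-margin solution has `a = (r/2 - ε)/M` and `‖w‖ = γ̃/M`. At test time, a point of `P_r` is
robustly classified iff `⟨w, X̃⟩` lies beyond `∓(a r/2 - ε_te |a|)`, and `⟨w, X̃⟩ ~ N(0, σ²‖w‖²)`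
is symmetric, so the robust accuracy is `Φ((a r/2 - ε_te |a|)/(σ ‖w‖))`.
-/

open MeasureTheory ProbabilityTheory Real Set
open scoped ENNReal BigOperators

noncomputable section

/-- Euclidean dot product on `Fin d → ℝ`. -/
def dot {d : ℕ} (u v : Fin d → ℝ) : ℝ := ∑ j, u j * v j

/-- Euclidean (`ℓ2`) norm on `Fin d → ℝ`. -/
def norm2 {d : ℕ} (u : Fin d → ℝ) : ℝ := Real.sqrt (∑ j, (u j) ^ 2)

/-- The (minimum) margin of the linear classifier `θ` on the dataset `{(x i, y i)}`. -/
def margin {d n : ℕ} (x : Fin n → Fin d → ℝ) (y : Fin n → ℝ) (θ : Fin d → ℝ) : ℝ :=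
  ⨅ i, y i * dot θ (x i)

/-- The worst-case (robust) margin of `θ` on the dataset, with respect to the
signal-directed perturbation sets `S_ε(x) = {x + β • e₁ : |β| ≤ ε}`. -/
def robustMargin {m n : ℕ} (ε : ℝ) (x : Fin n → Fin (m + 1) → ℝ) (y : Fin n → ℝ)
    (θ : Fin (m + 1) → ℝ) : ℝ :=
  ⨅ i, ⨅ β : {b : ℝ // |b| ≤ ε}, y i * dot θ (x i + β.1 • (Pi.single 0 1 : Fin (m + 1) → ℝ))

/-- The isotropic Gaussian measure `N(0, σ² I_m)` on `ℝ^m`. -/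
def gaussPi (m : ℕ) (σ : ℝ) : Measure (Fin m → ℝ) :=
  Measure.pi fun _ => gaussianReal 0 (Real.toNNReal (σ ^ 2))

/-- The data distribution `P_r` on `ℝ^{m+1} × {±1}`: the label `Y` is uniform on `{±1}`
and the covariate is `X = (Y · r/2, X̃)` with `X̃ ~ N(0, σ² I_m)`. -/
def Pdist (m : ℕ) (r σ : ℝ) : Measure ((Fin (m + 1) → ℝ) × ℝ) :=
  (2⁻¹ : ℝ≥0∞) • (gaussPi m σ).map (fun xt => ((Fin.cons (r / 2) xt : Fin (m + 1) → ℝ), (1 : ℝ)))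
    + (2⁻¹ : ℝ≥0∞) • (gaussPi m σ).map
        (fun xt => ((Fin.cons (-(r / 2)) xt : Fin (m + 1) → ℝ), (-1 : ℝ)))

/-- The standard normal cumulative distribution function `Φ`. -/
def stdGaussianCDF (z : ℝ) : ℝ := ((gaussianReal 0 1) (Iic z)).toReal

open scoped NNReal Matrix

lemma gaussianReal_pi_map_sum {ι : Type*} [Fintype ι] (μ : ι → ℝ) (v : ι → ℝ≥0) :
    (Measure.pi fun i => gaussianReal (μ i) (v i)).map (fun p => ∑ i, p i)
      = gaussianReal (∑ i, μ i) (∑ i, v i) := by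
  refine Measure.ext_of_charFun (funext fun t => ?_)
  rw [charFun_map_sum_pi_eq_prod, Finset.prod_apply]
  simp only [charFun_gaussianReal, ← Complex.exp_sum]
  push_cast
  rw [Finset.sum_sub_distrib, ← Finset.sum_mul, ← Finset.sum_div, ← Finset.sum_mul,
    ← Finset.mul_sum]

lemma gaussPi_map_dot (m : ℕ) (σ : ℝ) (w : Fin m → ℝ) :
    (gaussPi m σ).map (dot w) = gaussianReal 0 ((σ * norm2 w) ^ 2).toNNReal := by
  have hsplit : dot w = (fun p : Fin m → ℝ => ∑ j, p j) ∘ fun xt j => w j * xt j := rfl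
  rw [hsplit, ← Measure.map_map (by fun_prop) (by fun_prop), gaussPi,
    Measure.pi_map_pi (fun _ => by fun_prop)]
  simp only [gaussianReal_map_const_mul, mul_zero]
  rw [gaussianReal_pi_map_sum, Finset.sum_const_zero]
  congr 1
  apply NNReal.coe_injective
  simp only [NNReal.coe_sum, NNReal.coe_mul, NNReal.coe_mk, Real.coe_toNNReal _ (sq_nonneg _),
    norm2, mul_pow, Real.sq_sqrt (Finset.sum_nonneg fun j _ => sq_nonneg (w j)), Finset.mul_sum]
  rw [Real.coe_toNNReal _ (by positivity)]
  exact Finset.sum_congr rfl fun j _ => mul_comm _ _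

lemma gaussianReal_Iio_eq_Iic {μ : ℝ} {v : ℝ≥0} (hv : v ≠ 0) (z : ℝ) :
    gaussianReal μ v (Iio z) = gaussianReal μ v (Iic z) :=
  measure_congr (Iio_ae_eq_Iic' (gaussianReal_absolutelyContinuous μ hv Real.volume_singleton))

lemma gaussianReal_Ioi_neg_eq_Iic {v : ℝ≥0} (hv : v ≠ 0) (z : ℝ) :
    gaussianReal 0 v (Ioi (-z)) = gaussianReal 0 v (Iic z) := by
  have hsymm : (gaussianReal 0 v).map (fun x => -x) = gaussianReal 0 v := by
    simpa using gaussianReal_map_neg (μ := 0) (v := v)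
  conv_rhs => rw [← gaussianReal_Iio_eq_Iic hv, ← hsymm]
  rw [Measure.map_apply measurable_neg measurableSet_Iio, Set.neg_preimage, Set.neg_Iio]

lemma gaussianReal_Iic_toReal_eq_stdGaussianCDF {s : ℝ} (hs : 0 < s) (z : ℝ) :
    (gaussianReal 0 (s ^ 2).toNNReal (Iic z)).toReal = stdGaussianCDF (z / s) := by
  have hscale : (gaussianReal 0 1).map (s * ·) = gaussianReal 0 (s ^ 2).toNNReal := by
    rw [gaussianReal_map_const_mul, mul_zero, mul_one]
    congr 1
    exact (Real.toNNReal_of_nonneg (sq_nonneg s)).symm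
  rw [← hscale, Measure.map_apply (by fun_prop) measurableSet_Iic, stdGaussianCDF]
  congr 2
  ext t
  simp [le_div_iff₀' hs]

lemma iInf_add_mul_of_abs_le {ε : ℝ} (hε : 0 ≤ ε) (c k : ℝ) :
    ⨅ β : {b : ℝ // |b| ≤ ε}, (c + β.1 * k) = c - ε * |k| := by
  have hlower : ∀ β : {b : ℝ // |b| ≤ ε}, c - ε * |k| ≤ c + β.1 * k := fun β => by
    have : |β.1 * k| ≤ ε * |k| := by
      rw [abs_mul]; exact mul_le_mul_of_nonneg_right β.2 (abs_nonneg k)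
    linarith [neg_abs_le (β.1 * k)]
  have hattained : ∃ β : {b : ℝ // |b| ≤ ε}, c + β.1 * k = c - ε * |k| := by
    rcases le_or_gt 0 k with hk | hk
    · exact ⟨⟨-ε, by simp [abs_of_nonneg hε]⟩, by rw [abs_of_nonneg hk]; ring⟩
    · exact ⟨⟨ε, by simp [abs_of_nonneg hε]⟩, by rw [abs_of_neg hk]; ring⟩
  obtain ⟨β₀, hβ₀⟩ := hattained
  have : Nonempty {b : ℝ // |b| ≤ ε} := ⟨β₀⟩
  exact le_antisymm (hβ₀ ▸ ciInf_le ⟨_, forall_mem_range.2 hlower⟩ β₀) (le_ciInf hlower)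

lemma ciInf_add_const_of_finite {ι : Type*} [Finite ι] [Nonempty ι] (f : ι → ℝ) (c : ℝ) :
    ⨅ i, (f i + c) = (⨅ i, f i) + c :=
  ((OrderIso.addRight c).map_ciInf (Set.finite_range f).bddBelow).symm

lemma dot_add_smul_single {d : ℕ} (θ v : Fin d → ℝ) (i : Fin d) (b : ℝ) :
    dot θ (v + b • Pi.single i 1) = dot θ v + b * θ i := by
  change θ ⬝ᵥ (v + b • Pi.single i 1) = θ ⬝ᵥ v + b * θ i
  rw [dotProduct_add, dotProduct_smul, dotProduct_single, smul_eq_mul, mul_one]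

lemma iInf_mul_dot_add_smul_single {d : ℕ} {ε : ℝ} (hε : 0 ≤ ε) (t : ℝ) (θ v : Fin d → ℝ)
    (i : Fin d) :
    ⨅ β : {b : ℝ // |b| ≤ ε}, t * dot θ (v + β.1 • Pi.single i 1)
      = t * dot θ v - ε * |t * θ i| := by
  simp_rw [dot_add_smul_single, mul_add, mul_left_comm t, ← iInf_add_mul_of_abs_le hε]

lemma dot_eq_head_add_tail {m : ℕ} (θ v : Fin (m + 1) → ℝ) :
    dot θ v = θ 0 * v 0 + dot (Fin.tail θ) (Fin.tail v) := by
  simp [dot, Fin.sum_univ_succ, Fin.tail]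

lemma norm2_eq_norm {d : ℕ} (u : Fin d → ℝ) : norm2 u = ‖WithLp.toLp 2 u‖ := by
  simp [norm2, EuclideanSpace.norm_eq]

lemma norm2_smul {d : ℕ} (c : ℝ) (u : Fin d → ℝ) : norm2 (c • u) = |c| * norm2 u := by
  simp [norm2_eq_norm, norm_smul]

lemma norm2_eq_zero {d : ℕ} {u : Fin d → ℝ} : norm2 u = 0 ↔ u = 0 := by
  simp [norm2_eq_norm]

lemma sq_norm2_eq_head_add_tail {m : ℕ} (θ : Fin (m + 1) → ℝ) :
    norm2 θ ^ 2 = θ 0 ^ 2 + norm2 (Fin.tail θ) ^ 2 := by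
  rw [norm2, norm2, Real.sq_sqrt (by positivity), Real.sq_sqrt (by positivity), Fin.sum_univ_succ]
  rfl

lemma margin_smul {d n : ℕ} (x : Fin n → Fin d → ℝ) (y : Fin n → ℝ) (θ : Fin d → ℝ) {c : ℝ}
    (hc : 0 ≤ c) : margin x y (c • θ) = c * margin x y θ := by
  simp only [margin, Real.mul_iInf_of_nonneg hc]
  congr 1 with i
  change y i * ((c • θ) ⬝ᵥ x i) = c * (y i * (θ ⬝ᵥ x i))
  rw [smul_dotProduct, smul_eq_mul]
  ring

lemma margin_le_norm2_mul {d n : ℕ} {x : Fin n → Fin d → ℝ} {y : Fin n → ℝ} {γ : ℝ}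
    (hγ : IsGreatest {c | ∃ θ : Fin d → ℝ, norm2 θ ≤ 1 ∧ c = margin x y θ} γ)
    (θ : Fin d → ℝ) : margin x y θ ≤ norm2 θ * γ := by
  rcases eq_or_ne θ 0 with rfl | hθ
  · simp [margin, dot, norm2]
  have hpos : 0 < norm2 θ := (Real.sqrt_nonneg _).lt_of_ne' (norm2_eq_zero.not.2 hθ)
  have hunit : norm2 ((norm2 θ)⁻¹ • θ) ≤ 1 := by
    rw [norm2_smul, abs_of_pos (inv_pos.2 hpos), inv_mul_cancel₀ hpos.ne']
  calc margin x y θ = norm2 θ * margin x y ((norm2 θ)⁻¹ • θ) := by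
        rw [margin_smul _ _ _ (inv_pos.2 hpos).le, ← mul_assoc, mul_inv_cancel₀ hpos.ne', one_mul]
    _ ≤ norm2 θ * γ := mul_le_mul_of_nonneg_left (hγ.2 ⟨_, hunit, rfl⟩) hpos.le

lemma eq_div_sqrt_of_sqrt_le_mul_add_mul {a b u v : ℝ} (hab : a ^ 2 + b ^ 2 ≤ 1)
    (huv : 0 < u ^ 2 + v ^ 2) (h : √(u ^ 2 + v ^ 2) ≤ a * u + b * v) :
    a = u / √(u ^ 2 + v ^ 2) ∧ b = v / √(u ^ 2 + v ^ 2) := by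
  set M := √(u ^ 2 + v ^ 2)
  have hM : 0 < M := Real.sqrt_pos.2 huv
  have hM2 : M ^ 2 = u ^ 2 + v ^ 2 := Real.sq_sqrt huv.le
  -- equality case of Cauchy–Schwarz:
  -- `(a M - u)² + (b M - v)² = M² (a² + b²) - 2 M (a u + b v) + M² ≤ 0`
  have hzero : (a * M - u) ^ 2 + (b * M - v) ^ 2 ≤ 0 := by nlinarith
  have ha : a * M - u = 0 := by nlinarith [sq_nonneg (a * M - u), sq_nonneg (b * M - v)]
  have hb : b * M - v = 0 := by nlinarith [sq_nonneg (a * M - u), sq_nonneg (b * M - v)]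
  constructor <;> field_simp <;> linarith

section RobustMaxMargin

variable {m n : ℕ} {r ε γ : ℝ} {x : Fin n → Fin (m + 1) → ℝ} {y : Fin n → ℝ}

lemma robustMargin_eq (hn : 0 < n) (hy : ∀ i, y i = 1 ∨ y i = -1)
    (hx1 : ∀ i, x i 0 = y i * (r / 2)) (hε : 0 ≤ ε) (θ : Fin (m + 1) → ℝ) :
    robustMargin ε x y θ
      = margin (fun i => Fin.tail (x i)) y (Fin.tail θ) + (θ 0 * (r / 2) - ε * |θ 0|) := by
  have : Nonempty (Fin n) := ⟨⟨0, hn⟩⟩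
  have hscore : ∀ i, ⨅ β : {b : ℝ // |b| ≤ ε}, y i * dot θ (x i + β.1 • Pi.single 0 1)
      = y i * dot (Fin.tail θ) (Fin.tail (x i)) + (θ 0 * (r / 2) - ε * |θ 0|) := fun i => by
    have hsq : y i * y i = 1 := by rcases hy i with h | h <;> rw [h] <;> norm_num
    have habs : |y i| = 1 := by rcases hy i with h | h <;> rw [h] <;> norm_num
    rw [iInf_mul_dot_add_smul_single hε, dot_eq_head_add_tail, hx1, abs_mul, habs, one_mul]
    linear_combination (θ 0 * (r / 2)) * hsq
  rw [robustMargin, iInf_congr hscore, ciInf_add_const_of_finite, margin]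

lemma robustMargin_le (hn : 0 < n) (hy : ∀ i, y i = 1 ∨ y i = -1)
    (hx1 : ∀ i, x i 0 = y i * (r / 2)) (hε : 0 ≤ ε)
    (hγ : IsGreatest
      {c | ∃ θt : Fin m → ℝ, norm2 θt ≤ 1 ∧ c = margin (fun i => Fin.tail (x i)) y θt} γ)
    (θ : Fin (m + 1) → ℝ) :
    robustMargin ε x y θ ≤ norm2 (Fin.tail θ) * γ + (θ 0 * (r / 2) - ε * |θ 0|) := by
  rw [robustMargin_eq hn hy hx1 hε]
  gcongr
  exact margin_le_norm2_mul hγ _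

lemma exists_robustMargin_eq_sqrt (hn : 0 < n) (hy : ∀ i, y i = 1 ∨ y i = -1)
    (hx1 : ∀ i, x i 0 = y i * (r / 2)) (hε : 0 ≤ ε) (hεr : ε ≤ r / 2) (hγ_pos : 0 < γ)
    (hγ : IsGreatest
      {c | ∃ θt : Fin m → ℝ, norm2 θt ≤ 1 ∧ c = margin (fun i => Fin.tail (x i)) y θt} γ) :
    ∃ θ, norm2 θ ≤ 1 ∧ robustMargin ε x y θ = √((r / 2 - ε) ^ 2 + γ ^ 2) := by
  obtain ⟨θt, hθt, hmargin⟩ := hγ.1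
  set M := √((r / 2 - ε) ^ 2 + γ ^ 2)
  have hM : 0 < M := Real.sqrt_pos.2 (by positivity)
  have hM2 : M ^ 2 = (r / 2 - ε) ^ 2 + γ ^ 2 := Real.sq_sqrt (by positivity)
  refine ⟨Fin.cons ((r / 2 - ε) / M) ((γ / M) • θt), ?_, ?_⟩
  · have htail : norm2 ((γ / M) • θt) ≤ γ / M := by
      rw [norm2_smul, abs_of_pos (by positivity)]
      exact mul_le_of_le_one_right (by positivity) hθt
    have hsq : norm2 (Fin.cons ((r / 2 - ε) / M) ((γ / M) • θt) : Fin (m + 1) → ℝ) ^ 2 ≤ 1 := by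
      rw [sq_norm2_eq_head_add_tail, Fin.cons_zero, Fin.tail_cons]
      calc ((r / 2 - ε) / M) ^ 2 + norm2 ((γ / M) • θt) ^ 2
          ≤ ((r / 2 - ε) / M) ^ 2 + (γ / M) ^ 2 := by
            gcongr
            exact Real.sqrt_nonneg _
        _ = 1 := by field_simp; linarith
    exact (sq_le_one_iff₀ (Real.sqrt_nonneg _)).1 hsq
  · rw [robustMargin_eq hn hy hx1 hε, Fin.cons_zero, Fin.tail_cons,
      margin_smul _ _ _ (by positivity), ← hmargin, abs_of_nonneg (div_nonneg (by linarith) hM.le)]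
    field_simp
    linarith

lemma robustMaxMargin_head_eq_and_norm2_tail_eq (hn : 0 < n) (hy : ∀ i, y i = 1 ∨ y i = -1)
    (hx1 : ∀ i, x i 0 = y i * (r / 2)) (hr : 0 < r) (hε : 0 ≤ ε) (hεr : ε ≤ r / 2)
    (hγ_pos : 0 < γ)
    (hγ : IsGreatest
      {c | ∃ θt : Fin m → ℝ, norm2 θt ≤ 1 ∧ c = margin (fun i => Fin.tail (x i)) y θt} γ)
    {θhat : Fin (m + 1) → ℝ} (hθhat_norm : norm2 θhat ≤ 1)
    (hθhat_max : ∀ θ : Fin (m + 1) → ℝ, norm2 θ ≤ 1 →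
      robustMargin ε x y θ ≤ robustMargin ε x y θhat) :
    θhat 0 = (r / 2 - ε) / √((r / 2 - ε) ^ 2 + γ ^ 2)
      ∧ norm2 (Fin.tail θhat) = γ / √((r / 2 - ε) ^ 2 + γ ^ 2) := by
  obtain ⟨θstar, hθstar, hstar⟩ := exists_robustMargin_eq_sqrt hn hy hx1 hε hεr hγ_pos hγ
  set a := θhat 0
  set M := √((r / 2 - ε) ^ 2 + γ ^ 2) with hMdef
  have hM : 0 < M := Real.sqrt_pos.2 (by positivity)
  have hM2 : M ^ 2 = (r / 2 - ε) ^ 2 + γ ^ 2 := Real.sq_sqrt (by positivity)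
  have hopt : M ≤ norm2 (Fin.tail θhat) * γ + (a * (r / 2) - ε * |a|) :=
    hstar ▸ (hθhat_max θstar hθstar).trans (robustMargin_le hn hy hx1 hε hγ θhat)
  have hsignal_le : a * (r / 2) - ε * |a| ≤ |a| * (r / 2 - ε) := by
    nlinarith [le_abs_self a]
  have hsq : |a| ^ 2 + norm2 (Fin.tail θhat) ^ 2 ≤ 1 := by
    rw [sq_abs, ← sq_norm2_eq_head_add_tail]
    exact pow_le_one₀ (Real.sqrt_nonneg _) hθhat_norm
  obtain ⟨habs, htail⟩ := eq_div_sqrt_of_sqrt_le_mul_add_mul (u := r / 2 - ε) (v := γ) hsq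
    (by positivity) (by linarith)
  rw [← hMdef] at habs htail
  refine ⟨?_, htail⟩
  have hcancel : M - norm2 (Fin.tail θhat) * γ = |a| * (r / 2 - ε) := by
    rw [htail, habs]
    field_simp
    linarith
  have ha : |a| ≤ a := by nlinarith
  rw [← habs, abs_of_nonneg ((abs_nonneg a).trans ha)]

end RobustMaxMargin

def robustAccuracy (m : ℕ) (r σ ε : ℝ) (θ : Fin (m + 1) → ℝ) : ℝ :=
  ((Pdist m r σ) {p | 0 < ⨅ β : {b : ℝ // |b| ≤ ε},
    p.2 * dot θ (p.1 + β.1 • (Pi.single 0 1 : Fin (m + 1) → ℝ))}).toReal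

lemma robustAccuracy_eq_stdGaussianCDF {m : ℕ} {r σ ε : ℝ} (hσ : 0 < σ) (hε : 0 ≤ ε)
    (θ : Fin (m + 1) → ℝ) (hθ : norm2 (Fin.tail θ) ≠ 0) :
    robustAccuracy m r σ ε θ
      = stdGaussianCDF ((θ 0 * (r / 2) - ε * |θ 0|) / (σ * norm2 (Fin.tail θ))) := by
  set c := θ 0 * (r / 2) - ε * |θ 0|
  set s := σ * norm2 (Fin.tail θ)
  have hs : 0 < s := mul_pos hσ ((Real.sqrt_nonneg _).lt_of_ne' hθ)
  have hv : (s ^ 2).toNNReal ≠ 0 := by simp [hs.ne']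
  set E := {p : (Fin (m + 1) → ℝ) × ℝ | 0 < p.2 * dot θ p.1 - ε * |p.2 * θ 0|}
  have hevent : {p : (Fin (m + 1) → ℝ) × ℝ | 0 < ⨅ β : {b : ℝ // |b| ≤ ε},
      p.2 * dot θ (p.1 + β.1 • (Pi.single 0 1 : Fin (m + 1) → ℝ))} = E := by
    simp_rw [iInf_mul_dot_add_smul_single hε]; rfl
  have hE : MeasurableSet E := measurableSet_lt measurable_const (by unfold dot; fun_prop)
  have hdot : ∀ (t : ℝ) (xt : Fin m → ℝ),
      dot θ (Fin.cons t xt : Fin (m + 1) → ℝ) = θ 0 * t + dot (Fin.tail θ) xt := fun t xt => by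
    rw [dot_eq_head_add_tail, Fin.cons_zero, Fin.tail_cons]
  have hpos : (fun xt => ((Fin.cons (r / 2) xt : Fin (m + 1) → ℝ), (1 : ℝ))) ⁻¹' E
      = dot (Fin.tail θ) ⁻¹' Ioi (-c) := by
    ext xt
    simp only [E, mem_preimage, mem_ofPred_eq, mem_Ioi, hdot, one_mul, c]
    constructor <;> intro <;> linarith
  have hneg : (fun xt => ((Fin.cons (-(r / 2)) xt : Fin (m + 1) → ℝ), (-1 : ℝ))) ⁻¹' E
      = dot (Fin.tail θ) ⁻¹' Iio c := by
    ext xt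
    simp only [E, mem_preimage, mem_ofPred_eq, mem_Iio, hdot, neg_one_mul, abs_neg, c]
    constructor <;> intro <;> linarith
  have hlaw := gaussPi_map_dot m σ (Fin.tail θ)
  have hmeas_dot : Measurable (dot (Fin.tail θ)) := by unfold dot; fun_prop
  rw [robustAccuracy, hevent, Pdist, Measure.add_apply, Measure.smul_apply, Measure.smul_apply,
    Measure.map_apply (by fun_prop) hE, Measure.map_apply (by fun_prop) hE, hpos, hneg,
    ← Measure.map_apply hmeas_dot measurableSet_Ioi,
    ← Measure.map_apply hmeas_dot measurableSet_Iio, hlaw, gaussianReal_Ioi_neg_eq_Iic hv,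
    gaussianReal_Iio_eq_Iic hv, smul_eq_mul, ← add_mul, ENNReal.inv_two_add_inv_two, one_mul,
    gaussianReal_Iic_toReal_eq_stdGaussianCDF hs]

theorem robust_accuracy_of_robust_max_margin_general
    {m n : ℕ} (hn : 0 < n) (r σ εtr εte : ℝ) (hr : 0 < r) (hσ : 0 < σ)
    (hεtr : 0 ≤ εtr) (hεtr2 : εtr < r / 2) (hεte : 0 ≤ εte)
    (x : Fin n → Fin (m + 1) → ℝ) (y : Fin n → ℝ)
    (hy : ∀ i, y i = 1 ∨ y i = -1)
    (hx1 : ∀ i, x i 0 = y i * (r / 2))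
    (γt : ℝ) (hγt_pos : 0 < γt)
    (hγt : IsGreatest
      {c | ∃ θt : Fin m → ℝ, norm2 θt ≤ 1 ∧ c = margin (fun i => Fin.tail (x i)) y θt} γt)
    (θhat : Fin (m + 1) → ℝ) (hθhat_norm : norm2 θhat = 1)
    (hθhat_max : ∀ θ : Fin (m + 1) → ℝ, norm2 θ ≤ 1 →
      robustMargin εtr x y θ ≤ robustMargin εtr x y θhat) :
    ((Pdist m r σ) {p | 0 < ⨅ β : {b : ℝ // |b| ≤ εte},
        p.2 * dot θhat (p.1 + β.1 • (Pi.single 0 1 : Fin (m + 1) → ℝ))}).toReal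
      = stdGaussianCDF (r * (r - 2 * εte) / (4 * σ * γt)
          - εtr * (r - 2 * εte) / (2 * σ * γt)) := by
  obtain ⟨hsignal, htail⟩ := robustMaxMargin_head_eq_and_norm2_tail_eq hn hy hx1 hr hεtr
    hεtr2.le hγt_pos hγt hθhat_norm.le hθhat_max
  have hM : 0 < √((r / 2 - εtr) ^ 2 + γt ^ 2) := Real.sqrt_pos.2 (by positivity)
  have htail_ne : norm2 (Fin.tail θhat) ≠ 0 := by rw [htail]; positivity
  refine (robustAccuracy_eq_stdGaussianCDF hσ hεte θhat htail_ne).trans ?_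
  rw [hsignal, htail, abs_of_pos (div_pos (by linarith) hM)]
  congr 1
  field_simp
  ring

/-- For a dataset with first covariate coordinate `y_i · r/2` whose induced
dataset has maximum `ℓ2`-margin `γ̃ > 0`, the `ε_te`-robust accuracy on `P_r` (signal-directed
perturbations) of any unit-norm `ε_tr`-robust max-`ℓ2`-margin solution `θ̂^{ε_tr}` equals
`Φ(r(r − 2ε_te)/(4σγ̃) − ε_tr(r − 2ε_te)/(2σγ̃))`. -/
theorem robust_accuracy_of_robust_max_margin
    {m n : ℕ} (hm : 1 ≤ m) (hn : 0 < n) (r σ εtr εte : ℝ) (hr : 0 < r) (hσ : 0 < σ)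
    (hεtr : 0 ≤ εtr) (hεtr2 : εtr < r / 2) (hεte : 0 ≤ εte) (hεte2 : εte < r / 2)
    (x : Fin n → Fin (m + 1) → ℝ) (y : Fin n → ℝ)
    (hy : ∀ i, y i = 1 ∨ y i = -1)
    (hx1 : ∀ i, x i 0 = y i * (r / 2))
    (γt : ℝ) (hγt_pos : 0 < γt)
    (hγt : IsGreatest
      {c | ∃ θt : Fin m → ℝ, norm2 θt ≤ 1 ∧ c = margin (fun i => Fin.tail (x i)) y θt} γt)
    (θhat : Fin (m + 1) → ℝ) (hθhat_norm : norm2 θhat = 1)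
    (hθhat_max : ∀ θ : Fin (m + 1) → ℝ, norm2 θ ≤ 1 →
      robustMargin εtr x y θ ≤ robustMargin εtr x y θhat) :
    ((Pdist m r σ) {p | 0 < ⨅ β : {b : ℝ // |b| ≤ εte},
        p.2 * dot θhat (p.1 + β.1 • (Pi.single 0 1 : Fin (m + 1) → ℝ))}).toReal
      = stdGaussianCDF (r * (r - 2 * εte) / (4 * σ * γt)
          - εtr * (r - 2 * εte) / (2 * σ * γt)) :=
  robust_accuracy_of_robust_max_margin_general hn r σ εtr εte hr hσ hεtr hεtr2 hεte x y hy hx1 γt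
    hγt_pos hγt θhat hθhat_norm hθhat_max

end
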